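/- arXiv:2204.05398 — 3 statements merged into one kernel-verified Lean document; each statement's English description precedes it below -/
import Mathlib

section
/- Let W ∈ ℝ^{m×m} be symmetric, and suppose U_ℓ ∈ ℝ^{m×ℓ} factors as U_ℓ = Q Σ Rᵀ where Q ∈ ℝ^{m×k} satisfies Qᵀ W Q = I_k, Σ ∈ ℝ^{k×k}, and R ∈ ℝ^{ℓ×k}. Let u ∈ ℝ^m, set e = u − Q Qᵀ W u and p = (eᵀ W e)^{1/2}; assume p > 0 and set ẽ = e/p. Then the m×(ℓ+1) matrix [U_ℓ | u] obtained by appending u as a new last column satisfies [U_ℓ | u] = [Q | ẽ] · Y · [[R, 0],[0, 1]]ᵀ, where Y ∈ ℝ^{(k+1)×(k+1)} is the block matrix [[Σ, Qᵀ W u],[0, p]], and moreover the matrix [Q | ẽ] ∈ ℝ^{m×(k+1)} satisfies [Q | ẽ]ᵀ W [Q | ẽ] = I_{k+1}. -/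
/-!
One step of W-weighted Gram–Schmidt. Since `Qᵀ W Q = 1`, the residual `e = u - Q Qᵀ W u` is
W-orthogonal to the columns of `Q`, so normalising it by its W-norm `p` extends `Q` to a
W-orthonormal `[Q | ẽ]`. Writing `u = Q (Qᵀ W u) + p ẽ`, the new column of the factorisation is
read off block by block.
-/

open Matrix

noncomputable section

/-- `[A | b]`: the matrix obtained by appending the column `b` to the matrix `A`. -/
def appendCol {m n : Type*} (A : Matrix m n ℝ) (b : m → ℝ) :
    Matrix m (n ⊕ Fin 1) ℝ :=
  Matrix.of fun i => Sum.elim (A i) fun _ => b i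

namespace Matrix

variable {m l k : Type*}

lemma appendCol_eq_fromCols {n : Type*} (A : Matrix m n ℝ) (b : m → ℝ) :
    appendCol A b = fromCols A (replicateCol (Fin 1) b) := by
  ext i (j | j) <;> rfl

lemma appendCol_mul_fromBlocks_mul_transpose [Fintype k] (Q : Matrix m k ℝ) (c : m → ℝ)
    (S : Matrix k k ℝ) (d : k → ℝ) (p : ℝ) (R : Matrix l k ℝ) :
    appendCol Q c *
        fromBlocks S (replicateCol (Fin 1) d) 0 (of fun (_ : Fin 1) (_ : Fin 1) => p) *
        (fromBlocks R 0 0 (1 : Matrix (Fin 1) (Fin 1) ℝ))ᵀ =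
      appendCol (Q * S * Rᵀ) (Q *ᵥ d + p • c) := by
  rw [appendCol_eq_fromCols, appendCol_eq_fromCols, fromBlocks_transpose,
    fromCols_mul_fromBlocks, fromCols_mul_fromBlocks]
  congr 1
  · simp
  · ext i j
    simp [mul_apply, mulVec, dotProduct, mul_comm]

lemma transpose_mulVec_mulVec_sub_proj_eq_zero {𝕜 : Type*} [Ring 𝕜] [Fintype m] [Fintype k]
    [DecidableEq k] {W : Matrix m m 𝕜} {Q : Matrix m k 𝕜} (hQ : Qᵀ * W * Q = 1) (u : m → 𝕜) :
    Qᵀ *ᵥ (W *ᵥ (u - Q *ᵥ (Qᵀ *ᵥ (W *ᵥ u)))) = 0 := by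
  have hQd (d : k → 𝕜) : Qᵀ *ᵥ (W *ᵥ (Q *ᵥ d)) = d := by
    rw [mulVec_mulVec, mulVec_mulVec, hQ, one_mulVec]
  rw [mulVec_sub, mulVec_sub, hQd, sub_self]

lemma inv_sqrt_smul_dotProduct_mulVec_self_eq_one [Fintype m] {W : Matrix m m ℝ} {e : m → ℝ}
    (he : 0 < e ⬝ᵥ (W *ᵥ e)) :
    ((√(e ⬝ᵥ (W *ᵥ e)))⁻¹ • e) ⬝ᵥ (W *ᵥ ((√(e ⬝ᵥ (W *ᵥ e)))⁻¹ • e)) = 1 := by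
  rw [mulVec_smul, smul_dotProduct, dotProduct_smul, smul_eq_mul, smul_eq_mul, ← mul_assoc,
    ← mul_inv, Real.mul_self_sqrt he.le, inv_mul_cancel₀ he.ne']

lemma appendCol_transpose_mul_mul_self_eq_one [Fintype m] [DecidableEq k] {W : Matrix m m ℝ}
    (hW : W.IsSymm) {Q : Matrix m k ℝ} (hQ : Qᵀ * W * Q = 1) {c : m → ℝ}
    (hQc : Qᵀ *ᵥ (W *ᵥ c) = 0) (hc : c ⬝ᵥ (W *ᵥ c) = 1) :
    (appendCol Q c)ᵀ * W * appendCol Q c = 1 := by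
  rw [appendCol_eq_fromCols, transpose_fromCols, fromRows_mul, fromRows_mul,
    mul_fromCols, mul_fromCols, fromRows_fromCols_eq_fromBlocks, hQ, ← fromBlocks_one]
  have hQWc : Qᵀ * W * replicateCol (Fin 1) c = 0 := by
    rw [Matrix.mul_assoc, ← replicateCol_mulVec, ← replicateCol_mulVec, hQc, replicateCol_zero]
  congr 1
  · simpa [transpose_mul, hW.eq, Matrix.mul_assoc] using congrArg transpose hQWc
  · rw [transpose_replicateCol, Matrix.mul_assoc, ← replicateCol_mulVec,
      replicateRow_mul_replicateCol, hc]
    ext i j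
    simp [one_apply, Subsingleton.elim i j]

end Matrix

theorem stmt0 {m ℓ k : ℕ}
    (W : Matrix (Fin m) (Fin m) ℝ) (hW : W.IsSymm)
    (U : Matrix (Fin m) (Fin ℓ) ℝ)
    (Q : Matrix (Fin m) (Fin k) ℝ)
    (S : Matrix (Fin k) (Fin k) ℝ)
    (R : Matrix (Fin ℓ) (Fin k) ℝ)
    (hU : U = Q * S * Rᵀ)
    (hQ : Qᵀ * W * Q = 1)
    (u e : Fin m → ℝ)
    (he : e = u - Q *ᵥ (Qᵀ *ᵥ (W *ᵥ u)))
    (p : ℝ) (hp : p = Real.sqrt (e ⬝ᵥ (W *ᵥ e))) (hppos : 0 < p)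
    (etil : Fin m → ℝ) (hetil : etil = p⁻¹ • e) :
    appendCol U u =
      appendCol Q etil *
        fromBlocks S (Matrix.of fun i (_ : Fin 1) => (Qᵀ *ᵥ (W *ᵥ u)) i) 0
          (Matrix.of fun (_ : Fin 1) (_ : Fin 1) => p) *
        (fromBlocks R 0 0 1)ᵀ ∧
    (appendCol Q etil)ᵀ * W * appendCol Q etil = 1 := by
  have hu : u = Q *ᵥ (Qᵀ *ᵥ (W *ᵥ u)) + p • etil := by
    rw [hetil, smul_inv_smul₀ hppos.ne', he, add_sub_cancel]
  have hQe : Qᵀ *ᵥ (W *ᵥ etil) = 0 := by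
    rw [hetil, mulVec_smul, mulVec_smul, he, transpose_mulVec_mulVec_sub_proj_eq_zero hQ,
      smul_zero]
  have he_pos : 0 < e ⬝ᵥ (W *ᵥ e) := Real.sqrt_pos.mp (hp ▸ hppos)
  refine ⟨?_, appendCol_transpose_mul_mul_self_eq_one hW hQ hQe ?_⟩
  -- The products in the statement elaborate through the `CStarMatrix` multiplication instance,
  -- which `rw` cannot match against `Matrix` products, but which is defeq to it.
  · rw [hU]
    nth_rw 1 [hu]
    exact (appendCol_mul_fromBlocks_mul_transpose Q etil S _ p R).symm
  · rw [hetil, hp]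
    exact inv_sqrt_smul_dotProduct_mulVec_self_eq_one he_pos
end
end

section
/- Let Σ ∈ ℝ^{k×k} and let d₁, d₂ ∈ ℝ^k (in the incremental SVD these are d₁ = Qᵀ W u_{ℓ+1} and d₂ = Qᵀ W u_{ℓ+2}). Suppose [Σ | d₁] = Q₍₁₎ Σ₍₁₎ R₍₁₎ᵀ is a thin SVD, with Q₍₁₎ ∈ ℝ^{k×k} orthogonal (Q₍₁₎ᵀ Q₍₁₎ = Q₍₁₎ Q₍₁₎ᵀ = I_k), Σ₍₁₎ ∈ ℝ^{k×k} diagonal with nonnegative entries, and R₍₁₎ ∈ ℝ^{(k+1)×k} with R₍₁₎ᵀ R₍₁₎ = I_k; and suppose [Σ₍₁₎ | Q₍₁₎ᵀ d₂] = Q₍₂₎ Σ₍₂₎ R₍₂₎ᵀ is likewise a thin SVD. Define Q̃ = Q₍₁₎ Q₍₂₎, Σ̃ = Σ₍₂₎, and R̃ = [[R₍₁₎, 0],[0, 1]] R₍₂₎ ∈ ℝ^{(k+2)×k}. Then [Σ | d₁ | d₂] = Q̃ Σ̃ R̃ᵀ, and this is a thin SVD: Q̃ᵀ Q̃ = I_k,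 R̃ᵀ R̃ = I_k, and Σ̃ is diagonal with nonnegative entries. -/
/-!
If `X = Q D Rᵀ` with `Q` orthogonal, then `[X | v] = Q [D | Qᵀ v] (diag(R, 1))ᵀ`, because `Q Qᵀ = 1`
lets `v` be written as `Q (Qᵀ v)`. Applied to the first SVD with `v = d₂`, and then substituting the
second SVD for `[Σ₍₁₎ | Q₍₁₎ᵀ d₂]`, this gives the factorization. Orthonormality of columns is preserved
by products and by the block-diagonal extension `diag(R, 1)`.
-/

open Matrix

noncomputable section

section

variable {l m n p o : Type*}

lemma mul_appendCol [Fintype n] (A : Matrix m n ℝ) (B : Matrix n p ℝ) (v : n → ℝ) :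
    A * appendCol B v = appendCol (A * B) (A *ᵥ v) := by
  ext i (j | j)
  · simp [appendCol, mul_apply]
  · simp [appendCol, mul_apply, mulVec, dotProduct]

lemma appendCol_mul_fromBlocks_one [Fintype n] (X : Matrix m n ℝ) (v : m → ℝ)
    (N : Matrix n p ℝ) :
    appendCol X v * fromBlocks N 0 0 (1 : Matrix (Fin 1) (Fin 1) ℝ) = appendCol (X * N) v := by
  ext i (j | j)
  · simp [appendCol, mul_apply, fromBlocks, Fintype.sum_sum_type]
  · simp [appendCol, mul_apply, fromBlocks, Fintype.sum_sum_type, Fin.eq_zero j]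

lemma appendCol_mul_mul_transpose [Fintype m] [DecidableEq m] [Fintype n] {Q : Matrix m m ℝ}
    (hQ : Q * Qᵀ = 1) (D : Matrix m n ℝ) (R : Matrix p n ℝ) (v : m → ℝ) :
    appendCol (Q * D * Rᵀ) v =
      Q * appendCol D (Qᵀ *ᵥ v) * (fromBlocks R 0 0 (1 : Matrix (Fin 1) (Fin 1) ℝ))ᵀ := by
  rw [fromBlocks_transpose, transpose_zero, transpose_zero, transpose_one,
    Matrix.mul_assoc Q (appendCol _ _), appendCol_mul_fromBlocks_one, mul_appendCol,
    mulVec_mulVec, hQ, one_mulVec, Matrix.mul_assoc]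

lemma transpose_mul_self_mul_eq_one [Fintype l] [Fintype m] [DecidableEq m] [Fintype n]
    [DecidableEq n] {A : Matrix l m ℝ} {B : Matrix m n ℝ} (hA : Aᵀ * A = 1) (hB : Bᵀ * B = 1) :
    (A * B)ᵀ * (A * B) = 1 := by
  rw [transpose_mul, Matrix.mul_assoc, ← Matrix.mul_assoc Aᵀ, hA, Matrix.one_mul, hB]

lemma fromBlocks_transpose_mul_self_eq_one [Fintype m] [Fintype p] [Fintype o]
    [DecidableEq m] [DecidableEq o] {R : Matrix p m ℝ} (hR : Rᵀ * R = 1) :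
    (fromBlocks R 0 0 1 : Matrix (p ⊕ o) (m ⊕ o) ℝ)ᵀ *
      (fromBlocks R 0 0 1 : Matrix (p ⊕ o) (m ⊕ o) ℝ) = 1 := by
  rw [fromBlocks_transpose, fromBlocks_multiply]
  simp [hR]

end

theorem stmt4_general {k : ℕ}
    (S : Matrix (Fin k) (Fin k) ℝ) (d1 d2 : Fin k → ℝ)
    (Q1 : Matrix (Fin k) (Fin k) ℝ) (s1 : Fin k → ℝ)
    (R1 : Matrix (Fin k ⊕ Fin 1) (Fin k) ℝ)
    (hQ1 : Q1ᵀ * Q1 = 1) (hQ1' : Q1 * Q1ᵀ = 1)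
    (hR1 : R1ᵀ * R1 = 1)
    (hSVD1 : appendCol S d1 = Q1 * diagonal s1 * R1ᵀ)
    (Q2 : Matrix (Fin k) (Fin k) ℝ) (s2 : Fin k → ℝ)
    (R2 : Matrix (Fin k ⊕ Fin 1) (Fin k) ℝ)
    (hQ2 : Q2ᵀ * Q2 = 1)
    (hs2 : ∀ i, 0 ≤ s2 i) (hR2 : R2ᵀ * R2 = 1)
    (hSVD2 : appendCol (diagonal s1) (Q1ᵀ *ᵥ d2) = Q2 * diagonal s2 * R2ᵀ) :
    appendCol (appendCol S d1) d2 =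
      (Q1 * Q2) * diagonal s2 *
        ((fromBlocks R1 0 0 1 :
            Matrix ((Fin k ⊕ Fin 1) ⊕ Fin 1) (Fin k ⊕ Fin 1) ℝ) * R2)ᵀ ∧
    (Q1 * Q2)ᵀ * (Q1 * Q2) = 1 ∧
    ((fromBlocks R1 0 0 1 :
        Matrix ((Fin k ⊕ Fin 1) ⊕ Fin 1) (Fin k ⊕ Fin 1) ℝ) * R2)ᵀ *
      ((fromBlocks R1 0 0 1 :
        Matrix ((Fin k ⊕ Fin 1) ⊕ Fin 1) (Fin k ⊕ Fin 1) ℝ) * R2) = 1 ∧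
    (∀ i, 0 ≤ s2 i) := by
  refine ⟨?_, transpose_mul_self_mul_eq_one hQ1 hQ2,
    transpose_mul_self_mul_eq_one (fromBlocks_transpose_mul_self_eq_one hR1) hR2, hs2⟩
  rw [hSVD1, appendCol_mul_mul_transpose hQ1', hSVD2, transpose_mul]
  simp only [Matrix.mul_assoc]

theorem stmt4 {k : ℕ}
    (S : Matrix (Fin k) (Fin k) ℝ) (d1 d2 : Fin k → ℝ)
    (Q1 : Matrix (Fin k) (Fin k) ℝ) (s1 : Fin k → ℝ)
    (R1 : Matrix (Fin k ⊕ Fin 1) (Fin k) ℝ)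
    (hQ1 : Q1ᵀ * Q1 = 1) (hQ1' : Q1 * Q1ᵀ = 1)
    (hs1 : ∀ i, 0 ≤ s1 i) (hR1 : R1ᵀ * R1 = 1)
    (hSVD1 : appendCol S d1 = Q1 * diagonal s1 * R1ᵀ)
    (Q2 : Matrix (Fin k) (Fin k) ℝ) (s2 : Fin k → ℝ)
    (R2 : Matrix (Fin k ⊕ Fin 1) (Fin k) ℝ)
    (hQ2 : Q2ᵀ * Q2 = 1) (hQ2' : Q2 * Q2ᵀ = 1)
    (hs2 : ∀ i, 0 ≤ s2 i) (hR2 : R2ᵀ * R2 = 1)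
    (hSVD2 : appendCol (diagonal s1) (Q1ᵀ *ᵥ d2) = Q2 * diagonal s2 * R2ᵀ) :
    appendCol (appendCol S d1) d2 =
      (Q1 * Q2) * diagonal s2 *
        ((fromBlocks R1 0 0 1 :
            Matrix ((Fin k ⊕ Fin 1) ⊕ Fin 1) (Fin k ⊕ Fin 1) ℝ) * R2)ᵀ ∧
    (Q1 * Q2)ᵀ * (Q1 * Q2) = 1 ∧
    ((fromBlocks R1 0 0 1 :
        Matrix ((Fin k ⊕ Fin 1) ⊕ Fin 1) (Fin k ⊕ Fin 1) ℝ) * R2)ᵀ *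
      ((fromBlocks R1 0 0 1 :
        Matrix ((Fin k ⊕ Fin 1) ⊕ Fin 1) (Fin k ⊕ Fin 1) ℝ) * R2) = 1 ∧
    (∀ i, 0 ≤ s2 i) :=
  stmt4_general S d1 d2 Q1 s1 R1 hQ1 hQ1' hR1 hSVD1 Q2 s2 R2 hQ2 hs2 hR2 hSVD2
end
end

section
/- Let Σ = diag(σ₁, …, σ_k) ∈ ℝ^{k×k} with σ₁ ≥ σ₂ ≥ … ≥ σ_k ≥ 0, let d ∈ ℝ^k, p ≥ 0, and let Y = [[Σ, d],[0, p]] ∈ ℝ^{(k+1)×(k+1)}. Let μ₁ ≥ μ₂ ≥ … ≥ μ_{k+1} ≥ 0 be the singular values of Y (so Y = Q_Y diag(μ₁,…,μ_{k+1}) R_Yᵀ for some orthogonal Q_Y, R_Y). Then the singular values interlace: μ_{i+1} ≤ σ_i ≤ μ_i for every i = 1, …, k; in particular μ_{k+1} ≤ σ_k ≤ μ_k ≤ σ_{k−1} ≤ … ≤ σ₁ ≤ μ₁. -/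
open Matrix Module

noncomputable section

/-- The one-column-bordered diagonal matrix `[[Σ, d],[0, p]] ∈ ℝ^{(k+1)×(k+1)}`,
with `Σ = diagonal σ ∈ ℝ^{k×k}`, reindexed by `Fin (k+1)`. -/
def borderMat {k : ℕ} (σ d : Fin k → ℝ) (p : ℝ) :
    Matrix (Fin (k + 1)) (Fin (k + 1)) ℝ :=
  (fromBlocks (diagonal σ) (Matrix.of fun i (_ : Fin 1) => d i) 0
      (Matrix.of fun (_ : Fin 1) (_ : Fin 1) => p)).submatrix
    finSumFinEquiv.symm finSumFinEquiv.symm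

/-- Existence of a nonzero vector satisfying fewer than `n` linear constraints. -/
lemma aux_exists_ne_zero {n : ℕ} {ι : Type*} [Fintype ι]
    (hc : Fintype.card ι < n)
    (c : ι → ((Fin n → ℝ) →ₗ[ℝ] ℝ)) :
    ∃ x : Fin n → ℝ, x ≠ 0 ∧ ∀ j, c j x = 0 := by
  set L : (Fin n → ℝ) →ₗ[ℝ] (ι → ℝ) := LinearMap.pi c with hL
  have h1 : finrank ℝ (LinearMap.range L) + finrank ℝ (LinearMap.ker L) = n := by
    rw [LinearMap.finrank_range_add_finrank_ker]
    simp
  have h2 : finrank ℝ (LinearMap.range L) ≤ Fintype.card ι := by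
    have := Submodule.finrank_le (LinearMap.range L)
    simpa using this
  have h3 : 0 < finrank ℝ (LinearMap.ker L) := by omega
  have : Nontrivial (LinearMap.ker L) := Module.nontrivial_of_finrank_pos h3
  obtain ⟨⟨x, hx⟩, hx0⟩ := exists_ne (0 : LinearMap.ker L)
  refine ⟨x, ?_, ?_⟩
  · intro h; apply hx0; ext; simp [h]
  · intro j
    have h := hx
    rw [LinearMap.mem_ker] at h
    simpa [hL] using congrFun h j

lemma aux_orth {n : ℕ} (M : Matrix (Fin n) (Fin n) ℝ) (hM : Mᵀ * M = 1)
    (w : Fin n → ℝ) : ∑ j, ((M *ᵥ w) j) ^ 2 = ∑ j, (w j) ^ 2 := by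
  have h : (M *ᵥ w) ⬝ᵥ (M *ᵥ w) = w ⬝ᵥ w := by
    rw [dotProduct_mulVec, ← mulVec_transpose, mulVec_mulVec, hM, one_mulVec]
  simpa [dotProduct, sq] using h

lemma borderMat_mulVec_castSucc {k : ℕ} (σ d : Fin k → ℝ) (p : ℝ) (x : Fin (k+1) → ℝ)
    (m : Fin k) :
    ((borderMat σ d p) *ᵥ x) m.castSucc = σ m * x m.castSucc + d m * x (Fin.last k) := by
  have h1 : finSumFinEquiv (Sum.inl m : Fin k ⊕ Fin 1) = m.castSucc := by
    simp [Fin.ext_iff]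
  have h2 : finSumFinEquiv (Sum.inr 0 : Fin k ⊕ Fin 1) = Fin.last k := by
    simp [Fin.ext_iff]
  rw [borderMat, submatrix_mulVec_equiv, fromBlocks_mulVec]
  simp only [Function.comp_apply, ← h1, Equiv.symm_apply_apply, Sum.elim_inl]
  have hca : ∀ j : Fin k, Fin.castAdd 1 j = j.castSucc := fun j => rfl
  have hna : (Fin.natAdd k (0 : Fin 1) : Fin (k+1)) = Fin.last k := by ext; simp
  simp [mulVec, dotProduct, diagonal_apply, ite_mul, hca, hna, Fin.sum_univ_succ,
    Finset.sum_ite_eq]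

lemma borderMat_mulVec_last {k : ℕ} (σ d : Fin k → ℝ) (p : ℝ) (x : Fin (k+1) → ℝ) :
    ((borderMat σ d p) *ᵥ x) (Fin.last k) = p * x (Fin.last k) := by
  have h2 : finSumFinEquiv (Sum.inr 0 : Fin k ⊕ Fin 1) = Fin.last k := by
    simp [Fin.ext_iff]
  rw [borderMat, submatrix_mulVec_equiv, fromBlocks_mulVec]
  simp only [Function.comp_apply, ← h2, Equiv.symm_apply_apply, Sum.elim_inr]
  have hna : (Fin.natAdd k (0 : Fin 1) : Fin (k+1)) = Fin.last k := by ext; simp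
  simp [mulVec, dotProduct, hna]

theorem stmt7 {k : ℕ}
    (σ d : Fin k → ℝ) (hσ0 : ∀ i, 0 ≤ σ i) (hσ : Antitone σ)
    (p : ℝ) (hp : 0 ≤ p)
    (QY RY : Matrix (Fin (k + 1)) (Fin (k + 1)) ℝ)
    (μ : Fin (k + 1) → ℝ)
    (hQY : QYᵀ * QY = 1) (hQY' : QY * QYᵀ = 1)
    (hRY : RYᵀ * RY = 1) (hRY' : RY * RYᵀ = 1)
    (hμ0 : ∀ i, 0 ≤ μ i) (hμ : Antitone μ)
    (hSVD : borderMat σ d p = QY * diagonal μ * RYᵀ) :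
    ∀ i : Fin k, μ i.succ ≤ σ i ∧ σ i ≤ μ i.castSucc := by
  set A := borderMat σ d p with hA
  -- quadratic form identity
  have hQF : ∀ x : Fin (k+1) → ℝ,
      ∑ j, ((A *ᵥ x) j) ^ 2 = ∑ j, (μ j) ^ 2 * ((RYᵀ *ᵥ x) j) ^ 2 := by
    intro x
    have h1 : A *ᵥ x = QY *ᵥ ((diagonal μ) *ᵥ (RYᵀ *ᵥ x)) := by
      rw [hSVD, mulVec_mulVec, mulVec_mulVec]
    rw [h1, aux_orth QY hQY]
    simp [mulVec_diagonal, mul_pow]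
  have hNorm : ∀ x : Fin (k+1) → ℝ,
      ∑ j, ((RYᵀ *ᵥ x) j) ^ 2 = ∑ j, (x j) ^ 2 := by
    intro x
    exact aux_orth RYᵀ (by rw [transpose_transpose]; exact hRY') x
  have hQF0 : ∀ x : Fin (k+1) → ℝ, x (Fin.last k) = 0 →
      ∑ j, ((A *ᵥ x) j) ^ 2 = ∑ m : Fin k, (σ m) ^ 2 * (x m.castSucc) ^ 2 := by
    intro x hx
    rw [Fin.sum_univ_castSucc]
    simp [hA, borderMat_mulVec_castSucc, borderMat_mulVec_last, hx, mul_pow]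
  -- common positivity
  have hposN : ∀ x : Fin (k+1) → ℝ, x ≠ 0 → 0 < ∑ j, (x j) ^ 2 := by
    intro x hx
    obtain ⟨j, hj⟩ := Function.ne_iff.mp hx
    exact Finset.sum_pos' (fun m _ => sq_nonneg _)
      ⟨j, Finset.mem_univ j, (sq_nonneg _).lt_of_ne (Ne.symm (pow_ne_zero 2 hj))⟩
  have sq_le : ∀ a b : ℝ, 0 ≤ a → 0 ≤ b → a ^ 2 ≤ b ^ 2 → a ≤ b := by
    intro a b ha hb h
    nlinarith
  intro i
  constructor
  · -- μ i.succ ≤ σ i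
    obtain ⟨x, hx0, hc⟩ := aux_exists_ne_zero (n := k+1)
      (ι := Fin (i.1+1) ⊕ Fin (k - i.1 - 1))
      (by simp only [Fintype.card_sum, Fintype.card_fin]; omega)
      (Sum.elim
        (fun m => LinearMap.proj
          (if _ : m.1 < i.1 then (⟨m.1, by omega⟩ : Fin (k+1)) else Fin.last k))
        (fun m => (LinearMap.proj (⟨m.1 + i.1 + 2, by omega⟩ : Fin (k+1))).comp
          (mulVecLin RYᵀ)))
    have hx1 : ∀ j : Fin (k+1), j < i.castSucc → x j = 0 := by
      intro j hj
      have hj' : j.1 < i.1 := by simpa [Fin.lt_def] using hj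
      have := hc (Sum.inl ⟨j.1, by omega⟩)
      simpa [hj', Fin.ext_iff] using this
    have hxlast : x (Fin.last k) = 0 := by
      have := hc (Sum.inl ⟨i.1, by omega⟩)
      simpa using this
    have hy1 : ∀ j : Fin (k+1), i.succ < j → (RYᵀ *ᵥ x) j = 0 := by
      intro j hj
      have hj' : i.1 + 1 < j.1 := by simpa [Fin.lt_def] using hj
      have := hc (Sum.inr ⟨j.1 - i.1 - 2, by omega⟩)
      have hje : (⟨j.1 - i.1 - 2 + i.1 + 2, by omega⟩ : Fin (k+1)) = j := by
        ext <;> simp <;> omega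
      rw [mulVec_transpose]
      simpa [hje] using this
    have hN := hposN x hx0
    -- lower bound
    have hlow : (μ i.succ) ^ 2 * ∑ j, (x j) ^ 2 ≤ ∑ j, ((A *ᵥ x) j) ^ 2 := by
      rw [hQF x, ← hNorm x, Finset.mul_sum]
      refine Finset.sum_le_sum fun j _ => ?_
      by_cases hyj : (RYᵀ *ᵥ x) j = 0
      · simp [hyj]
      · have hji : j ≤ i.succ := by
          by_contra hcon
          exact hyj (hy1 j (lt_of_not_ge hcon))
        have : μ i.succ ≤ μ j := hμ hji
        have : (μ i.succ) ^ 2 ≤ (μ j) ^ 2 := pow_le_pow_left₀ (hμ0 _) this 2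
        exact mul_le_mul_of_nonneg_right this (sq_nonneg _)
    -- upper bound
    have hup : ∑ j, ((A *ᵥ x) j) ^ 2 ≤ (σ i) ^ 2 * ∑ j, (x j) ^ 2 := by
      rw [hQF0 x hxlast]
      have hNx : ∑ j, (x j) ^ 2 = ∑ m : Fin k, (x m.castSucc) ^ 2 := by
        rw [Fin.sum_univ_castSucc, hxlast]; simp
      rw [hNx, Finset.mul_sum]
      refine Finset.sum_le_sum fun m _ => ?_
      by_cases hxm : x m.castSucc = 0
      · simp [hxm]
      · have hmi : i ≤ m := by
          by_contra hcon
          exact hxm (hx1 m.castSucc (by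
            rw [Fin.castSucc_lt_castSucc_iff]
            exact lt_of_not_ge hcon))
        have : σ m ≤ σ i := hσ hmi
        have : (σ m) ^ 2 ≤ (σ i) ^ 2 := pow_le_pow_left₀ (hσ0 _) this 2
        exact mul_le_mul_of_nonneg_right this (sq_nonneg _)
    have : (μ i.succ) ^ 2 ≤ (σ i) ^ 2 :=
      le_of_mul_le_mul_right (by linarith) hN
    exact sq_le _ _ (hμ0 _) (hσ0 _) this
  · -- σ i ≤ μ i.castSucc
    obtain ⟨x, hx0, hc⟩ := aux_exists_ne_zero (n := k+1)
      (ι := Fin (k - i.1) ⊕ Fin i.1)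
      (by simp only [Fintype.card_sum, Fintype.card_fin]; omega)
      (Sum.elim
        (fun m => LinearMap.proj (⟨m.1 + i.1 + 1, by omega⟩ : Fin (k+1)))
        (fun m => (LinearMap.proj (⟨m.1, by omega⟩ : Fin (k+1))).comp
          (mulVecLin RYᵀ)))
    have hx1 : ∀ j : Fin (k+1), i.castSucc < j → x j = 0 := by
      intro j hj
      have hj' : i.1 < j.1 := by simpa [Fin.lt_def] using hj
      have := hc (Sum.inl ⟨j.1 - i.1 - 1, by omega⟩)
      have hje : (⟨j.1 - i.1 - 1 + i.1 + 1, by omega⟩ : Fin (k+1)) = j := by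
        ext <;> simp <;> omega
      simpa [hje] using this
    have hy1 : ∀ j : Fin (k+1), j < i.castSucc → (RYᵀ *ᵥ x) j = 0 := by
      intro j hj
      have hj' : j.1 < i.1 := by simpa [Fin.lt_def] using hj
      have := hc (Sum.inr ⟨j.1, by omega⟩)
      have hje : (⟨j.1, by omega⟩ : Fin (k+1)) = j := Fin.ext rfl
      rw [mulVec_transpose]
      simpa [hje] using this
    have hxlast : x (Fin.last k) = 0 :=
      hx1 (Fin.last k) (Fin.castSucc_lt_last i)
    have hN := hposN x hx0
    -- lower bound
    have hlow : (σ i) ^ 2 * ∑ j, (x j) ^ 2 ≤ ∑ j, ((A *ᵥ x) j) ^ 2 := by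
      rw [hQF0 x hxlast]
      have hNx : ∑ j, (x j) ^ 2 = ∑ m : Fin k, (x m.castSucc) ^ 2 := by
        rw [Fin.sum_univ_castSucc, hxlast]; simp
      rw [hNx, Finset.mul_sum]
      refine Finset.sum_le_sum fun m _ => ?_
      by_cases hxm : x m.castSucc = 0
      · simp [hxm]
      · have hmi : m ≤ i := by
          by_contra hcon
          exact hxm (hx1 m.castSucc (by
            rw [Fin.castSucc_lt_castSucc_iff]
            exact lt_of_not_ge hcon))
        have : σ i ≤ σ m := hσ hmi
        have : (σ i) ^ 2 ≤ (σ m) ^ 2 := pow_le_pow_left₀ (hσ0 _) this 2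
        exact mul_le_mul_of_nonneg_right this (sq_nonneg _)
    -- upper bound
    have hup : ∑ j, ((A *ᵥ x) j) ^ 2 ≤ (μ i.castSucc) ^ 2 * ∑ j, (x j) ^ 2 := by
      rw [hQF x, ← hNorm x, Finset.mul_sum]
      refine Finset.sum_le_sum fun j _ => ?_
      by_cases hyj : (RYᵀ *ᵥ x) j = 0
      · simp [hyj]
      · have hji : i.castSucc ≤ j := by
          by_contra hcon
          exact hyj (hy1 j (lt_of_not_ge hcon))
        have : μ j ≤ μ i.castSucc := hμ hji
        have : (μ j) ^ 2 ≤ (μ i.castSucc) ^ 2 := pow_le_pow_left₀ (hμ0 _) this 2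
        exact mul_le_mul_of_nonneg_right this (sq_nonneg _)
    have : (σ i) ^ 2 ≤ (μ i.castSucc) ^ 2 :=
      le_of_mul_le_mul_right (by linarith) hN
    exact sq_le _ _ (hσ0 _) (hμ0 _) this
end
end
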